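/- For ℝ⁺-exponent-strings x, y, u, v, the exp-edit distance satisfies dist(x·u·y, x·v·y) = dist(u, v). -/

import Mathlib

namespace ExpStr

variable {α S : Type*}

/-- Concatenation of exponent-string representations, merging the boundary
terms when the base characters coincide. -/
def eCat [DecidableEq α] (op : S → S → S) (p q : List (α × S)) : List (α × S) :=
  match p.getLast?, q with
  | some (a, s), (b, t) :: q' =>
      if a = b then p.dropLast ++ (a, op s t) :: q' else p ++ q
  | _, _ => p ++ q

/-- The defining property of an `S`-exponent-string:
consecutive base characters differ. -/
def IsExp (l : List (α × S)) : Prop := l.Chain' (fun x y => x.1 ≠ y.1)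

/-- The exponent-string corresponding to a representation. -/
def eRep [DecidableEq α] (op : S → S → S) : List (α × S) → List (α × S)
  | [] => []
  | x :: xs => eCat op [x] (eRep op xs)

end ExpStr

noncomputable section
namespace ExpStr
open MeasureTheory

variable {α : Type*}

/-- Length of an `ℝ⁺`-exponent-string: the sum of its exponents. -/
def eLen (l : List (α × ℝ)) : ℝ := (l.map Prod.snd).sum

/-- `ℝ⁺`-exponent-strings: consecutive base characters differ and all
exponents are positive reals. -/
def RES (l : List (α × ℝ)) : Prop := IsExp l ∧ ∀ x ∈ l, 0 < x.2

/-- Concatenation of `ℝ⁺`-exponent-strings (exponents added at the boundary). -/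
def rcat [DecidableEq α] (p q : List (α × ℝ)) : List (α × ℝ) :=
  eCat (· + ·) p q

/-- The `ℕ`-exponent-string (run-length encoding) corresponding to a word. -/
def ofWord [DecidableEq α] (w : List α) : List (α × ℝ) :=
  eRep (· + ·) (w.map fun a => (a, (1 : ℝ)))

/-- Multiply every exponent by `k`. -/
def scaleE (k : ℝ) (l : List (α × ℝ)) : List (α × ℝ) :=
  l.map fun x => (x.1, k * x.2)

/-- The base character of the position `x` in an `ℝ⁺`-exponent-string. -/
def charAt [Inhabited α] : List (α × ℝ) → ℝ → α
  | [], _ => default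
  | (a, s) :: t, x => if x < s then a else charAt t (x - s)

/-- A single exp-edit operation applied to an infix, with its cost:
insertion `λ → a^q`, deletion `a^q → λ`, or substitution `a^q → b^q`. -/
def Step [DecidableEq α] (wdel wins : α → ℝ) (wsub : α → α → ℝ)
    (u v : List (α × ℝ)) (c : ℝ) : Prop :=
  ∃ p₁ p₂ : List (α × ℝ), RES p₁ ∧ RES p₂ ∧
    ((∃ a q, 0 < q ∧ u = rcat p₁ p₂ ∧ v = rcat p₁ (rcat [(a, q)] p₂) ∧
        c = q * wins a) ∨
     (∃ a q, 0 < q ∧ u = rcat p₁ (rcat [(a, q)] p₂) ∧ v = rcat p₁ p₂ ∧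
        c = q * wdel a) ∨
     (∃ a b q, 0 < q ∧ u = rcat p₁ (rcat [(a, q)] p₂) ∧
        v = rcat p₁ (rcat [(b, q)] p₂) ∧ c = q * wsub a b))

/-- `EditCost wdel wins wsub u v c` holds iff there is a finite exp-edit
sequence from `u` to `v` of total cost `c`. -/
inductive EditCost [DecidableEq α] (wdel wins : α → ℝ) (wsub : α → α → ℝ)
    (u : List (α × ℝ)) : List (α × ℝ) → ℝ → Prop
  | refl : EditCost wdel wins wsub u u 0
  | step {p q : List (α × ℝ)} {c c' : ℝ} :
      EditCost wdel wins wsub u p c → Step wdel wins wsub p q c' →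
      EditCost wdel wins wsub u q (c + c')

/-- Exp-edit distance: the infimum cost of exp-edit sequences. -/
def eDist [DecidableEq α] (wdel wins : α → ℝ) (wsub : α → α → ℝ)
    (u v : List (α × ℝ)) : ℝ :=
  sInf {c | EditCost wdel wins wsub u v c}

/-- Exp-edit sequences all of whose intermediate terms satisfy `P`. -/
inductive EditCostIn [DecidableEq α] (P : List (α × ℝ) → Prop)
    (wdel wins : α → ℝ) (wsub : α → α → ℝ)
    (u : List (α × ℝ)) : List (α × ℝ) → ℝ → Prop
  | refl : EditCostIn P wdel wins wsub u u 0
  | step {p q : List (α × ℝ)} {c c' : ℝ} :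
      EditCostIn P wdel wins wsub u p c → Step wdel wins wsub p q c' → P q →
      EditCostIn P wdel wins wsub u q (c + c')

/-- All exponents are positive integers. -/
def IntExp (l : List (α × ℝ)) : Prop := ∀ x ∈ l, ∃ n : ℕ, x.2 = n

/-- All exponents are (positive) rationals. -/
def RatExp (l : List (α × ℝ)) : Prop := ∀ x ∈ l, ∃ r : ℚ, x.2 = r

/-- A single classical string edit operation with its cost. -/
def SStep (wdel wins : α → ℝ) (wsub : α → α → ℝ) (u v : List α) (c : ℝ) : Prop :=
  ∃ p₁ p₂ : List α,
    ((∃ a, u = p₁ ++ p₂ ∧ v = p₁ ++ a :: p₂ ∧ c = wins a) ∨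
     (∃ a, u = p₁ ++ a :: p₂ ∧ v = p₁ ++ p₂ ∧ c = wdel a) ∨
     (∃ a b, u = p₁ ++ a :: p₂ ∧ v = p₁ ++ b :: p₂ ∧ c = wsub a b))

/-- Total costs of classical string edit sequences. -/
inductive SEditCost (wdel wins : α → ℝ) (wsub : α → α → ℝ) (u : List α) :
    List α → ℝ → Prop
  | refl : SEditCost wdel wins wsub u u 0
  | step {p q : List α} {c c' : ℝ} :
      SEditCost wdel wins wsub u p c → SStep wdel wins wsub p q c' →
      SEditCost wdel wins wsub u q (c + c')

/-- Classical string edit distance. -/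
def sDist (wdel wins : α → ℝ) (wsub : α → α → ℝ) (u v : List α) : ℝ :=
  sInf {c | SEditCost wdel wins wsub u v c}

/-- X-projection of a diagonal segment `(x₀, y₀, t)`. -/
def mSegX (m : ℝ × ℝ × ℝ) : Set ℝ := Set.Ico m.1 (m.1 + m.2.2)

/-- Y-projection of a diagonal segment `(x₀, y₀, t)`. -/
def mSegY (m : ℝ × ℝ × ℝ) : Set ℝ := Set.Ico m.2.1 (m.2.1 + m.2.2)

/-- X-projection of a matching. -/
def mEX (M : List (ℝ × ℝ × ℝ)) : Set ℝ := ⋃ m ∈ M, mSegX m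

/-- Y-projection of a matching. -/
def mEY (M : List (ℝ × ℝ × ℝ)) : Set ℝ := ⋃ m ∈ M, mSegY m

/-- An exp-matching: a finite family of diagonal segments, each given as
`(x₀, y₀, t)` (start point and length parameter), lying in `[0,L₁)×[0,L₂)`,
with pairwise disjoint axis projections, and monotone. -/
def IsMatching (L₁ L₂ : ℝ) (M : List (ℝ × ℝ × ℝ)) : Prop :=
  (∀ m ∈ M, 0 < m.2.2 ∧ 0 ≤ m.1 ∧ 0 ≤ m.2.1 ∧
      m.1 + m.2.2 ≤ L₁ ∧ m.2.1 + m.2.2 ≤ L₂) ∧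
  M.Pairwise (fun m m' =>
      Disjoint (mSegX m) (mSegX m') ∧ Disjoint (mSegY m) (mSegY m')) ∧
  (∀ m ∈ M, ∀ m' ∈ M, ∀ s s' : ℝ, 0 ≤ s → s < m.2.2 → 0 ≤ s' → s' < m'.2.2 →
      m.1 + s < m'.1 + s' → m.2.1 + s ≤ m'.2.1 + s')

/-- Cost of an exp-matching: deletion and insertion integrals over the
unmatched positions plus the substitution (arc-length) integral over the
segments (the factor `1/√2` cancels the speed `√2` of the parametrization). -/
def mCost [Inhabited α] (wdel wins : α → ℝ) (wsub : α → α → ℝ)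
    (p₁ p₂ : List (α × ℝ)) (M : List (ℝ × ℝ × ℝ)) : ℝ :=
  (∫ x in Set.Ico 0 (eLen p₁) \ mEX M, wdel (charAt p₁ x)) +
  (∫ y in Set.Ico 0 (eLen p₂) \ mEY M, wins (charAt p₂ y)) +
  (M.map fun m => ∫ s in (0 : ℝ)..m.2.2,
      wsub (charAt p₁ (m.1 + s)) (charAt p₂ (m.2.1 + s))).sum

end ExpStr
end

/-!
The inequality `dist(x·u·y, x·v·y) ≤ dist(u, v)` holds because every edit sequence from `u` to
`v` can be performed inside the context `x·_·y`. For the converse it suffices, by induction on `x`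
and by reversing all strings, to cancel one leading block `γ^s`.

By the triangle inequalities for the weights, an edit sequence can be replaced, at no extra cost,
by a left-to-right alignment, in which each move consumes leading blocks of the source, the target,
or both. Peeling such an alignment of `γ^{s₁}·u` with `γ^{s₂}·v` block by block shows that
`dist(u, v)` is at most its cost plus the cost of resizing `γ^{s₂}` into `γ^{s₁}`; for
`s₁ = s₂ = s` the resize is free.
-/

namespace ExpStr

variable {α : Type*} {wdel wins : α → ℝ} {wsub : α → α → ℝ}

theorem RES_nil : RES ([] : List (α × ℝ)) := ⟨List.isChain_nil, by simp⟩

theorem RES.tail {x : α × ℝ} {u : List (α × ℝ)} (h : RES (x :: u)) : RES u :=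
  ⟨(List.isChain_cons.mp h.1).2, fun y hy => h.2 y (List.mem_cons_of_mem x hy)⟩

theorem RES.head_pos {x : α × ℝ} {u : List (α × ℝ)} (h : RES (x :: u)) : 0 < x.2 :=
  h.2 x List.mem_cons_self

theorem RES.singleton {a : α} {s : ℝ} (hs : 0 < s) : RES [(a, s)] :=
  ⟨List.isChain_singleton _, by simpa using hs⟩

theorem RES.reverse {l : List (α × ℝ)} (hl : RES l) : RES l.reverse :=
  ⟨List.isChain_reverse.mpr (hl.1.imp fun _ _ h => Ne.symm h),
    fun x hx => hl.2 x (List.mem_reverse.mp hx)⟩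

inductive Edit (wdel wins : α → ℝ) (wsub : α → α → ℝ) :
    List (α × ℝ) → List (α × ℝ) → ℝ → Prop
  | ins (a : α) {q : ℝ} : 0 < q → Edit wdel wins wsub [] [(a, q)] (q * wins a)
  | del (a : α) {q : ℝ} : 0 < q → Edit wdel wins wsub [(a, q)] [] (q * wdel a)
  | sub (a b : α) {q : ℝ} : 0 < q → Edit wdel wins wsub [(a, q)] [(b, q)] (q * wsub a b)

theorem Edit.reverse {X Y : List (α × ℝ)} {c : ℝ} (h : Edit wdel wins wsub X Y c) :
    X.reverse = X ∧ Y.reverse = Y := by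
  cases h <;> simp

theorem Edit.res {X Y : List (α × ℝ)} {c : ℝ} (h : Edit wdel wins wsub X Y c) :
    RES X ∧ RES Y := by
  cases h with
  | ins a hq => exact ⟨RES_nil, .singleton hq⟩
  | del a hq => exact ⟨.singleton hq, RES_nil⟩
  | sub a b hq => exact ⟨.singleton hq, .singleton hq⟩

section

variable [DecidableEq α]

@[simp] theorem rcat_nil_left (q : List (α × ℝ)) : rcat [] q = q := by
  cases q <;> rfl

@[simp] theorem rcat_nil_right (p : List (α × ℝ)) : rcat p [] = p := by
  rcases h : p.getLast? with _ | ⟨a, s⟩ <;> simp [rcat, eCat, h]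

theorem cons_rcat {p : List (α × ℝ)} (hp : p ≠ []) (x : α × ℝ) (q : List (α × ℝ)) :
    rcat (x :: p) q = x :: rcat p q := by
  obtain ⟨y, p, rfl⟩ := List.exists_cons_of_ne_nil hp
  unfold rcat eCat
  rw [List.getLast?_cons_cons]
  split <;> simp_all
  split_ifs <;> simp

theorem rcat_eq_nil {p q : List (α × ℝ)} (h : rcat p q = []) : p = [] ∧ q = [] := by
  unfold rcat eCat at h
  split at h
  · split at h <;> simp_all
  · simp_all

theorem singleton_rcat_cons_self (a : α) (s t : ℝ) (q : List (α × ℝ)) :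
    rcat [(a, s)] ((a, t) :: q) = (a, s + t) :: q := by
  simp [rcat, eCat]

theorem singleton_rcat_cons_of_ne {a b : α} (h : a ≠ b) (s t : ℝ) (q : List (α × ℝ)) :
    rcat [(a, s)] ((b, t) :: q) = (a, s) :: (b, t) :: q := by
  simp [rcat, eCat, h]

theorem singleton_rcat_assoc (x : α × ℝ) (q r : List (α × ℝ)) :
    rcat (rcat [x] q) r = rcat [x] (rcat q r) := by
  obtain ⟨a, s⟩ := x
  rcases q with _ | ⟨⟨b, t⟩, _ | ⟨y, q⟩⟩
  · simp
  · rcases r with _ | ⟨⟨c, u⟩, r⟩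
    · simp
    · by_cases hab : a = b <;> by_cases hbc : b = c <;> simp_all [rcat, eCat, add_assoc]
  · rw [cons_rcat (List.cons_ne_nil y q)]
    by_cases hab : a = b
    · subst hab
      simp only [singleton_rcat_cons_self, cons_rcat (List.cons_ne_nil y q)]
    · simp only [singleton_rcat_cons_of_ne hab, cons_rcat (List.cons_ne_nil _ _)]

theorem rcat_assoc (p q r : List (α × ℝ)) : rcat (rcat p q) r = rcat p (rcat q r) := by
  induction p with
  | nil => simp
  | cons x p ih =>
    rcases eq_or_ne p [] with rfl | hp
    · exact singleton_rcat_assoc x q r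
    · have hpq : rcat p q ≠ [] := fun h => hp (rcat_eq_nil h).1
      rw [cons_rcat hp, cons_rcat hpq, ih, cons_rcat hp]

theorem singleton_rcat_split (a : α) (s t : ℝ) (P : List (α × ℝ)) :
    rcat [(a, s + t)] P = rcat [(a, s)] (rcat [(a, t)] P) := by
  rw [← rcat_assoc, singleton_rcat_cons_self]

theorem concat_rcat_cons (p q : List (α × ℝ)) (a b : α) (s t : ℝ) :
    rcat (p ++ [(a, s)]) ((b, t) :: q) =
      if a = b then p ++ (a, s + t) :: q else p ++ (a, s) :: (b, t) :: q := by
  simp [rcat, eCat]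

theorem reverse_rcat (p q : List (α × ℝ)) : (rcat p q).reverse = rcat q.reverse p.reverse := by
  rcases List.eq_nil_or_concat p with rfl | ⟨p, ⟨a, s⟩, rfl⟩
  · simp
  rw [List.concat_eq_append]
  rcases q with _ | ⟨⟨b, t⟩, q⟩
  · simp
  have hq : ((b, t) :: q).reverse = q.reverse ++ [(b, t)] := by simp
  have hp : (p ++ [(a, s)]).reverse = (a, s) :: p.reverse := by simp
  rw [concat_rcat_cons, hq, hp, concat_rcat_cons]
  by_cases hab : a = b
  · subst hab; simp [add_comm]
  · simp [hab, Ne.symm hab]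

theorem cons_eq_singleton_rcat {x : α × ℝ} {u : List (α × ℝ)} (h : IsExp (x :: u)) :
    x :: u = rcat [x] u := by
  rcases u with _ | ⟨⟨b, t⟩, u⟩
  · simp
  · exact (singleton_rcat_cons_of_ne (List.isChain_cons_cons.mp h).1 _ _ _).symm

theorem RES.singleton_rcat {a : α} {s : ℝ} (hs : 0 < s) {q : List (α × ℝ)} (hq : RES q) :
    RES (rcat [(a, s)] q) := by
  rcases q with _ | ⟨⟨b, t⟩, q⟩
  · simpa using RES.singleton hs
  have ht : 0 < t := hq.head_pos
  by_cases hab : a = b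
  · subst hab
    rw [singleton_rcat_cons_self]
    refine ⟨List.isChain_cons.mpr ⟨?_, hq.tail.1⟩, ?_⟩
    · simpa using (List.isChain_cons.mp hq.1).1
    · simpa [add_pos hs ht] using hq.tail.2
  · rw [singleton_rcat_cons_of_ne hab]
    refine ⟨List.isChain_cons_cons.mpr ⟨hab, hq.1⟩, ?_⟩
    simpa [hs] using hq.2

theorem RES.rcat {p q : List (α × ℝ)} (hp : RES p) (hq : RES q) : RES (rcat p q) := by
  induction p with
  | nil => simpa
  | cons x p ih =>
    rw [cons_eq_singleton_rcat hp.1, rcat_assoc]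
    exact (ih hp.tail).singleton_rcat hp.head_pos

def headExp (b : α) : List (α × ℝ) → ℝ
  | [] => 0
  | (c, t) :: _ => if c = b then t else 0

def dropHeadBlock (b : α) : List (α × ℝ) → List (α × ℝ)
  | [] => []
  | (c, t) :: r => if c = b then r else (c, t) :: r

theorem singleton_rcat (b : α) (t : ℝ) (X : List (α × ℝ)) :
    rcat [(b, t)] X = (b, t + headExp b X) :: dropHeadBlock b X := by
  rcases X with _ | ⟨⟨c, u⟩, X⟩
  · simp [headExp, dropHeadBlock]
  · by_cases hcb : c = b
    · subst hcb; simp [rcat, eCat, headExp, dropHeadBlock]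
    · simp [rcat, eCat, headExp, dropHeadBlock, hcb, Ne.symm hcb]

theorem singleton_rcat_inj {a b : α} {s t : ℝ} {X Y : List (α × ℝ)}
    (h : rcat [(a, s)] X = rcat [(b, t)] Y) :
    a = b ∧ s + headExp a X = t + headExp b Y ∧ dropHeadBlock a X = dropHeadBlock b Y := by
  simp only [singleton_rcat, List.cons.injEq, Prod.mk.injEq] at h
  exact ⟨h.1.1, h.1.2, h.2⟩

theorem headExp_nonneg {X : List (α × ℝ)} (hX : RES X) (b : α) : 0 ≤ headExp b X := by
  rcases X with _ | ⟨⟨c, t⟩, X⟩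
  · simp [headExp]
  · have : 0 < t := hX.head_pos
    simp only [headExp]
    split_ifs <;> linarith

/-- `γ^s · u`; the case split avoids `rcat [(γ, 0)] u`, which is not an exponent-string. -/
noncomputable def prependPow (γ : α) (s : ℝ) (u : List (α × ℝ)) : List (α × ℝ) :=
  if 0 < s then rcat [(γ, s)] u else u

theorem prependPow_of_pos {γ : α} {s : ℝ} (hs : 0 < s) (u : List (α × ℝ)) :
    prependPow γ s u = rcat [(γ, s)] u := if_pos hs

theorem prependPow_of_nonpos {γ : α} {s : ℝ} (hs : s ≤ 0) (u : List (α × ℝ)) :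
    prependPow γ s u = u := if_neg hs.not_gt

@[simp] theorem prependPow_zero (γ : α) (u : List (α × ℝ)) : prependPow γ 0 u = u :=
  prependPow_of_nonpos le_rfl u

theorem prependPow_eq_nil {γ : α} {s : ℝ} {u : List (α × ℝ)} (h : prependPow γ s u = []) :
    s ≤ 0 ∧ u = [] := by
  unfold prependPow at h
  split_ifs at h with hs
  · simpa using (rcat_eq_nil h).1
  · exact ⟨not_lt.mp hs, h⟩

theorem RES.prependPow {u : List (α × ℝ)} (hu : RES u) (γ : α) (s : ℝ) :
    RES (prependPow γ s u) := by
  unfold ExpStr.prependPow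
  split_ifs with hs
  · exact hu.singleton_rcat hs
  · exact hu

theorem prependPow_rcat (γ : α) (s : ℝ) (p q : List (α × ℝ)) :
    rcat (prependPow γ s p) q = prependPow γ s (rcat p q) := by
  unfold prependPow
  split_ifs
  · exact rcat_assoc _ _ _
  · rfl

theorem prependPow_prependPow (γ : α) {s t : ℝ} (hs : 0 ≤ s) (ht : 0 ≤ t)
    (u : List (α × ℝ)) : prependPow γ s (prependPow γ t u) = prependPow γ (s + t) u := by
  rcases hs.lt_or_eq with hs | rfl
  · rcases ht.lt_or_eq with ht | rfl
    · rw [prependPow_of_pos hs, prependPow_of_pos ht, prependPow_of_pos (add_pos hs ht),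
        singleton_rcat_split]
    · simp
  · simp

theorem prependPow_headExp_dropHeadBlock {X : List (α × ℝ)} (hX : RES X) (b : α) :
    prependPow b (headExp b X) (dropHeadBlock b X) = X := by
  rcases X with _ | ⟨⟨c, t⟩, X⟩
  · simp [headExp, dropHeadBlock]
  · by_cases hcb : c = b
    · subst hcb
      simp only [headExp, dropHeadBlock, if_true]
      rw [prependPow_of_pos hX.head_pos, ← cons_eq_singleton_rcat hX.1]
    · simp [headExp, dropHeadBlock, hcb]

theorem eq_prependPow_of_headExp_eq {b : α} {t : ℝ} {X Y : List (α × ℝ)} (hX : RES X)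
    (hY : RES Y) (ht : 0 ≤ t) (hexp : headExp b X = t + headExp b Y)
    (hdrop : dropHeadBlock b X = dropHeadBlock b Y) : X = prependPow b t Y := by
  rw [← prependPow_headExp_dropHeadBlock hX b, ← prependPow_headExp_dropHeadBlock hY b, hexp,
    hdrop, prependPow_prependPow b ht (headExp_nonneg hY b)]

/-- The leading block `a^m` either lies within `γ^s`, or it covers `γ^s` and reaches into `u`. -/
theorem singleton_rcat_eq_prependPow {a γ : α} {m s : ℝ} {P u : List (α × ℝ)} (hm : 0 < m)
    (hs : 0 ≤ s) (hP : RES P) (hu : RES u) (h : rcat [(a, m)] P = prependPow γ s u) :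
    (m ≤ s ∧ a = γ ∧ P = prependPow γ (s - m) u) ∨
      (s < m ∧ (a = γ ∨ s = 0) ∧ u = prependPow a (m - s) P) := by
  rcases hs.lt_or_eq with hs | rfl
  · rw [prependPow_of_pos hs] at h
    obtain ⟨rfl, hexp, hdrop⟩ := singleton_rcat_inj h
    rcases le_or_gt m s with hms | hsm
    · exact Or.inl ⟨hms, rfl, eq_prependPow_of_headExp_eq hP hu (by linarith) (by linarith) hdrop⟩
    · exact Or.inr ⟨hsm, Or.inl rfl,
        eq_prependPow_of_headExp_eq hu hP (by linarith) (by linarith) hdrop.symm⟩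
  · exact Or.inr ⟨hm, Or.inr rfl, by simpa [prependPow_of_pos hm] using h.symm⟩

theorem singleton_rcat_eq_prependPow_nil {a b : α} {m q : ℝ} {X : List (α × ℝ)} (hm : 0 < m)
    (hq : 0 ≤ q) (hX : RES X) (h : rcat [(b, m)] X = prependPow a q []) :
    m ≤ q ∧ b = a ∧ X = prependPow a (q - m) [] := by
  rcases singleton_rcat_eq_prependPow hm hq hX RES_nil h with h | ⟨hqm, -, h⟩
  · exact h
  · linarith [(prependPow_eq_nil h.symm).1]

/-- A cut `q₁ | q₂` of `b^t · X` falls either after the block `b^t` or strictly inside it. -/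
theorem singleton_rcat_eq_rcat {b : α} {t : ℝ} {X q₁ q₂ : List (α × ℝ)} (ht : 0 < t)
    (hX : RES X) (hq₁ : RES q₁) (hq₂ : RES q₂) (hne : q₁ ≠ [])
    (h : rcat [(b, t)] X = rcat q₁ q₂) :
    (∃ q, RES q ∧ q₁ = rcat [(b, t)] q ∧ X = rcat q q₂) ∨
      (∃ t₁, 0 < t₁ ∧ t₁ < t ∧ q₁ = [(b, t₁)] ∧ q₂ = rcat [(b, t - t₁)] X) := by
  obtain ⟨⟨c, r⟩, q, rfl⟩ := List.exists_cons_of_ne_nil hne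
  have hr : 0 < r := hq₁.head_pos
  rcases eq_or_ne q [] with rfl | hq
  · rw [← prependPow_of_pos hr] at h
    rcases singleton_rcat_eq_prependPow ht hr.le hX hq₂ h with ⟨htr, rfl, hX'⟩ | ⟨hrt, hbc, hq₂'⟩
    · refine Or.inl ⟨prependPow b (r - t) [], RES_nil.prependPow b _, ?_, ?_⟩
      · rw [← prependPow_of_pos ht, prependPow_prependPow b ht.le (by linarith),
          prependPow_of_pos (by linarith)]
        simp
      · rw [prependPow_rcat, rcat_nil_left, hX']
    · obtain rfl : b = c := hbc.resolve_right hr.ne'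
      exact Or.inr ⟨r, hr, hrt, rfl, by rwa [prependPow_of_pos (by linarith)] at hq₂'⟩
  · rw [cons_rcat hq, singleton_rcat] at h
    simp only [List.cons.injEq, Prod.mk.injEq] at h
    obtain ⟨⟨rfl, hr'⟩, hdrop⟩ := h
    refine Or.inl ⟨prependPow b (headExp b X) q, hq₁.tail.prependPow b _, ?_, ?_⟩
    · rw [← prependPow_of_pos ht, prependPow_prependPow b ht.le (headExp_nonneg hX b), hr',
        prependPow_of_pos hr, ← cons_eq_singleton_rcat hq₁.1]
    · rw [prependPow_rcat, ← hdrop, prependPow_headExp_dropHeadBlock hX]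

theorem step_iff {u v : List (α × ℝ)} {c : ℝ} :
    Step wdel wins wsub u v c ↔ ∃ p₁ p₂ X Y, RES p₁ ∧ RES p₂ ∧ Edit wdel wins wsub X Y c ∧
      u = rcat p₁ (rcat X p₂) ∧ v = rcat p₁ (rcat Y p₂) := by
  constructor
  · rintro ⟨p₁, p₂, h₁, h₂, ⟨a, q, hq, rfl, rfl, rfl⟩ | ⟨a, q, hq, rfl, rfl, rfl⟩ |
      ⟨a, b, q, hq, rfl, rfl, rfl⟩⟩
    · exact ⟨p₁, p₂, _, _, h₁, h₂, .ins a hq, by simp, rfl⟩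
    · exact ⟨p₁, p₂, _, _, h₁, h₂, .del a hq, rfl, by simp⟩
    · exact ⟨p₁, p₂, _, _, h₁, h₂, .sub a b hq, rfl, rfl⟩
  · rintro ⟨p₁, p₂, X, Y, h₁, h₂, (⟨a, hq⟩ | ⟨a, hq⟩ | ⟨a, b, hq⟩), rfl, rfl⟩
    · exact ⟨p₁, p₂, h₁, h₂, Or.inl ⟨a, _, hq, by simp, rfl, rfl⟩⟩
    · exact ⟨p₁, p₂, h₁, h₂, Or.inr (Or.inl ⟨a, _, hq, rfl, by simp, rfl⟩)⟩
    · exact ⟨p₁, p₂, h₁, h₂, Or.inr (Or.inr ⟨a, b, _, hq, rfl, rfl, rfl⟩)⟩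

theorem Step.of_edit {X Y p : List (α × ℝ)} {c : ℝ} (h : Edit wdel wins wsub X Y c)
    (hp : RES p) : Step wdel wins wsub (rcat X p) (rcat Y p) c :=
  step_iff.mpr ⟨[], p, X, Y, RES_nil, hp, h, by simp, by simp⟩

theorem Step.rcat_left {z p q : List (α × ℝ)} {c : ℝ} (hz : RES z)
    (h : Step wdel wins wsub p q c) : Step wdel wins wsub (rcat z p) (rcat z q) c := by
  obtain ⟨p₁, p₂, X, Y, h₁, h₂, hXY, rfl, rfl⟩ := step_iff.mp h
  exact step_iff.mpr
    ⟨rcat z p₁, p₂, X, Y, hz.rcat h₁, h₂, hXY, (rcat_assoc ..).symm, (rcat_assoc ..).symm⟩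

theorem Step.reverse {p q : List (α × ℝ)} {c : ℝ} (h : Step wdel wins wsub p q c) :
    Step wdel wins wsub p.reverse q.reverse c := by
  obtain ⟨p₁, p₂, X, Y, h₁, h₂, hXY, rfl, rfl⟩ := step_iff.mp h
  refine step_iff.mpr ⟨p₂.reverse, p₁.reverse, X, Y, h₂.reverse, h₁.reverse, hXY, ?_, ?_⟩ <;>
    simp only [reverse_rcat, hXY.reverse, rcat_assoc]

theorem Step.nonneg (hdel : ∀ a, 0 ≤ wdel a) (hins : ∀ a, 0 ≤ wins a)
    (hsub : ∀ a b, 0 ≤ wsub a b) {u v : List (α × ℝ)} {c : ℝ}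
    (h : Step wdel wins wsub u v c) : 0 ≤ c := by
  obtain ⟨_, _, _, _, _, _, hXY, _, _⟩ := step_iff.mp h
  cases hXY with
  | ins a hq => exact mul_nonneg hq.le (hins a)
  | del a hq => exact mul_nonneg hq.le (hdel a)
  | sub a b hq => exact mul_nonneg hq.le (hsub a b)

theorem EditCost.single {u v : List (α × ℝ)} {c : ℝ} (h : Step wdel wins wsub u v c) :
    EditCost wdel wins wsub u v c := by
  simpa using EditCost.refl.step h

theorem EditCost.trans {u w v : List (α × ℝ)} {c₁ c₂ : ℝ}
    (h₁ : EditCost wdel wins wsub u w c₁) (h₂ : EditCost wdel wins wsub w v c₂) :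
    EditCost wdel wins wsub u v (c₁ + c₂) := by
  induction h₂ with
  | refl => simpa using h₁
  | step _ s ih => rw [← add_assoc]; exact ih.step s

theorem EditCost.rcat_left {z u v : List (α × ℝ)} {c : ℝ} (hz : RES z)
    (h : EditCost wdel wins wsub u v c) : EditCost wdel wins wsub (rcat z u) (rcat z v) c := by
  induction h with
  | refl => exact .refl
  | step _ s ih => exact ih.step (s.rcat_left hz)

theorem EditCost.reverse {u v : List (α × ℝ)} {c : ℝ} (h : EditCost wdel wins wsub u v c) :
    EditCost wdel wins wsub u.reverse v.reverse c := by
  induction h with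
  | refl => exact .refl
  | step _ s ih => exact ih.step s.reverse

theorem EditCost.nonneg (hdel : ∀ a, 0 ≤ wdel a) (hins : ∀ a, 0 ≤ wins a)
    (hsub : ∀ a b, 0 ≤ wsub a b) {u v : List (α × ℝ)} {c : ℝ}
    (h : EditCost wdel wins wsub u v c) : 0 ≤ c := by
  induction h with
  | refl => exact le_rfl
  | step _ s ih => exact add_nonneg ih (s.nonneg hdel hins hsub)

theorem exists_editCost_to_nil {u : List (α × ℝ)} (hu : RES u) :
    ∃ c, EditCost wdel wins wsub u [] c := by
  induction u with
  | nil => exact ⟨0, .refl⟩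
  | cons x u ih =>
    obtain ⟨c, hc⟩ := ih hu.tail
    refine ⟨x.2 * wdel x.1 + c, (EditCost.single ?_).trans hc⟩
    rw [cons_eq_singleton_rcat hu.1]
    simpa using Step.of_edit (.del x.1 hu.head_pos) hu.tail

theorem exists_editCost_from_nil {v : List (α × ℝ)} (hv : RES v) :
    ∃ c, EditCost wdel wins wsub [] v c := by
  induction v with
  | nil => exact ⟨0, .refl⟩
  | cons x v ih =>
    obtain ⟨c, hc⟩ := ih hv.tail
    refine ⟨c + x.2 * wins x.1, hc.step ?_⟩
    rw [cons_eq_singleton_rcat hv.1]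
    simpa using Step.of_edit (.ins x.1 hv.head_pos) hv.tail

theorem exists_editCost {u v : List (α × ℝ)} (hu : RES u) (hv : RES v) :
    ∃ c, EditCost wdel wins wsub u v c :=
  let ⟨_, h₁⟩ := exists_editCost_to_nil hu
  let ⟨_, h₂⟩ := exists_editCost_from_nil hv
  ⟨_, h₁.trans h₂⟩

theorem le_eDist {u v : List (α × ℝ)} {d : ℝ} (hu : RES u) (hv : RES v)
    (h : ∀ c, EditCost wdel wins wsub u v c → d ≤ c) : d ≤ eDist wdel wins wsub u v :=
  le_csInf (exists_editCost hu hv) h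

theorem eDist_reverse (u v : List (α × ℝ)) :
    eDist wdel wins wsub u.reverse v.reverse = eDist wdel wins wsub u v := by
  unfold eDist
  congr 1
  ext c
  exact ⟨fun h => by simpa using h.reverse, EditCost.reverse⟩

section Nonneg

variable (hdel : ∀ a, 0 ≤ wdel a) (hins : ∀ a, 0 ≤ wins a) (hsub : ∀ a b, 0 ≤ wsub a b)
include hdel hins hsub

theorem eDist_le {u v : List (α × ℝ)} {c : ℝ} (h : EditCost wdel wins wsub u v c) :
    eDist wdel wins wsub u v ≤ c :=
  csInf_le ⟨0, fun _ hc => hc.nonneg hdel hins hsub⟩ h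

theorem eDist_le_step_add {u w v : List (α × ℝ)} {d : ℝ} (s : Step wdel wins wsub u w d)
    (hw : RES w) (hv : RES v) : eDist wdel wins wsub u v ≤ d + eDist wdel wins wsub w v := by
  have : eDist wdel wins wsub u v - d ≤ eDist wdel wins wsub w v :=
    le_eDist hw hv fun c hc => by
      linarith [eDist_le hdel hins hsub ((EditCost.single s).trans hc)]
  linarith

theorem eDist_le_add_step {u w v : List (α × ℝ)} {d : ℝ} (s : Step wdel wins wsub w v d)
    (hu : RES u) (hw : RES w) : eDist wdel wins wsub u v ≤ eDist wdel wins wsub u w + d := by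
  have : eDist wdel wins wsub u v - d ≤ eDist wdel wins wsub u w :=
    le_eDist hu hw fun c hc => by linarith [eDist_le hdel hins hsub (hc.step s)]
  linarith

theorem eDist_rcat_left_le {z u v : List (α × ℝ)} (hz : RES z) (hu : RES u) (hv : RES v) :
    eDist wdel wins wsub (rcat z u) (rcat z v) ≤ eDist wdel wins wsub u v :=
  le_eDist hu hv fun _ hc => eDist_le hdel hins hsub (hc.rcat_left hz)

theorem eDist_prependPow_prependPow_le (γ : α) (t : ℝ) {u v : List (α × ℝ)} (hu : RES u)
    (hv : RES v) :
    eDist wdel wins wsub (prependPow γ t u) (prependPow γ t v) ≤ eDist wdel wins wsub u v := by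
  rcases le_or_gt t 0 with ht | ht
  · simp only [prependPow_of_nonpos ht, le_rfl]
  · simp only [prependPow_of_pos ht]
    exact eDist_rcat_left_le hdel hins hsub (RES.singleton ht) hu hv

theorem eDist_prependPow_left_le (a : α) {t : ℝ} (ht : 0 ≤ t) {u v : List (α × ℝ)}
    (hu : RES u) (hv : RES v) :
    eDist wdel wins wsub (prependPow a t u) v ≤ t * wdel a + eDist wdel wins wsub u v := by
  rcases ht.lt_or_eq with ht | rfl
  · rw [prependPow_of_pos ht]
    exact eDist_le_step_add hdel hins hsub (by simpa using Step.of_edit (.del a ht) hu) hu hv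
  · simp

theorem eDist_prependPow_right_le (b : α) {t : ℝ} (ht : 0 ≤ t) {u v : List (α × ℝ)}
    (hu : RES u) (hv : RES v) :
    eDist wdel wins wsub u (prependPow b t v) ≤ eDist wdel wins wsub u v + t * wins b := by
  rcases ht.lt_or_eq with ht | rfl
  · rw [prependPow_of_pos ht]
    exact eDist_le_add_step hdel hins hsub (by simpa using Step.of_edit (.ins b ht) hv) hu hv
  · simp

theorem eDist_prependPow_subst_le (a b : α) {t : ℝ} (ht : 0 ≤ t) {u v : List (α × ℝ)}
    (hu : RES u) (hv : RES v) :
    eDist wdel wins wsub (prependPow a t u) v ≤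
      t * wsub a b + eDist wdel wins wsub (prependPow b t u) v := by
  rcases ht.lt_or_eq with ht | rfl
  · simp only [prependPow_of_pos ht]
    exact eDist_le_step_add hdel hins hsub (Step.of_edit (.sub a b ht) hu)
      (hu.singleton_rcat ht) hv
  · simp

theorem eDist_prependPow_prependPow_le_of_le (a b : α) {d₁ d₂ : ℝ} (h₁ : 0 ≤ d₁)
    (h : d₁ ≤ d₂) {u v : List (α × ℝ)} (hu : RES u) (hv : RES v) :
    eDist wdel wins wsub (prependPow a d₁ u) (prependPow b d₂ v) ≤
      d₁ * wsub a b + (d₂ - d₁) * wins b + eDist wdel wins wsub u v := by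
  calc eDist wdel wins wsub (prependPow a d₁ u) (prependPow b d₂ v)
      ≤ d₁ * wsub a b + eDist wdel wins wsub (prependPow b d₁ u) (prependPow b d₂ v) :=
        eDist_prependPow_subst_le hdel hins hsub a b h₁ hu (hv.prependPow b d₂)
    _ = d₁ * wsub a b + eDist wdel wins wsub (prependPow b d₁ u)
          (prependPow b d₁ (prependPow b (d₂ - d₁) v)) := by
        rw [prependPow_prependPow b h₁ (sub_nonneg.mpr h), add_sub_cancel]
    _ ≤ d₁ * wsub a b + eDist wdel wins wsub u (prependPow b (d₂ - d₁) v) := by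
        gcongr
        exact eDist_prependPow_prependPow_le hdel hins hsub b d₁ hu (hv.prependPow b _)
    _ ≤ d₁ * wsub a b + (eDist wdel wins wsub u v + (d₂ - d₁) * wins b) := by
        gcongr
        exact eDist_prependPow_right_le hdel hins hsub b (sub_nonneg.mpr h) hu hv
    _ = _ := by ring

theorem eDist_prependPow_prependPow_le_of_ge (a b : α) {d₁ d₂ : ℝ} (h₂ : 0 ≤ d₂)
    (h : d₂ ≤ d₁) {u v : List (α × ℝ)} (hu : RES u) (hv : RES v) :
    eDist wdel wins wsub (prependPow a d₁ u) (prependPow b d₂ v) ≤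
      d₂ * wsub a b + (d₁ - d₂) * wdel a + eDist wdel wins wsub u v := by
  calc eDist wdel wins wsub (prependPow a d₁ u) (prependPow b d₂ v)
      = eDist wdel wins wsub (prependPow a d₂ (prependPow a (d₁ - d₂) u))
          (prependPow b d₂ v) := by
        rw [prependPow_prependPow a h₂ (sub_nonneg.mpr h), add_sub_cancel]
    _ ≤ d₂ * wsub a b + eDist wdel wins wsub (prependPow b d₂ (prependPow a (d₁ - d₂) u))
          (prependPow b d₂ v) :=
        eDist_prependPow_subst_le hdel hins hsub a b h₂ (hu.prependPow a _) (hv.prependPow b d₂)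
    _ ≤ d₂ * wsub a b + eDist wdel wins wsub (prependPow a (d₁ - d₂) u) v := by
        gcongr
        exact eDist_prependPow_prependPow_le hdel hins hsub b d₂ (hu.prependPow a _) hv
    _ ≤ d₂ * wsub a b + ((d₁ - d₂) * wdel a + eDist wdel wins wsub u v) := by
        gcongr
        exact eDist_prependPow_left_le hdel hins hsub a (sub_nonneg.mpr h) hu hv
    _ = _ := by ring

end Nonneg

/-- Left-to-right edit scripts: each move consumes a leading block of the source (deletion),
of the target (insertion), or leading blocks of equal length of both (substitution). -/
inductive Align (wdel wins : α → ℝ) (wsub : α → α → ℝ) :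
    List (α × ℝ) → List (α × ℝ) → ℝ → Prop
  | nil : Align wdel wins wsub [] [] 0
  | del {P Q : List (α × ℝ)} {c : ℝ} (a : α) {m : ℝ} (hm : 0 < m) :
      Align wdel wins wsub P Q c → Align wdel wins wsub (rcat [(a, m)] P) Q (m * wdel a + c)
  | ins {P Q : List (α × ℝ)} {c : ℝ} (b : α) {m : ℝ} (hm : 0 < m) :
      Align wdel wins wsub P Q c → Align wdel wins wsub P (rcat [(b, m)] Q) (m * wins b + c)
  | sub {P Q : List (α × ℝ)} {c : ℝ} (a b : α) {m : ℝ} (hm : 0 < m) :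
      Align wdel wins wsub P Q c →
        Align wdel wins wsub (rcat [(a, m)] P) (rcat [(b, m)] Q) (m * wsub a b + c)

namespace Align

theorem congr_cost {P Q : List (α × ℝ)} {c c' : ℝ} (h : Align wdel wins wsub P Q c)
    (hc : c = c') : Align wdel wins wsub P Q c' :=
  hc ▸ h

theorem res {P Q : List (α × ℝ)} {c : ℝ} (h : Align wdel wins wsub P Q c) : RES P ∧ RES Q := by
  induction h with
  | nil => exact ⟨RES_nil, RES_nil⟩
  | del a hm _ ih => exact ⟨ih.1.singleton_rcat hm, ih.2⟩
  | ins b hm _ ih => exact ⟨ih.1, ih.2.singleton_rcat hm⟩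
  | sub a b hm _ ih => exact ⟨ih.1.singleton_rcat hm, ih.2.singleton_rcat hm⟩

theorem refl (hsub0 : ∀ a, wsub a a = 0) {P : List (α × ℝ)} (hP : RES P) :
    Align wdel wins wsub P P 0 := by
  induction P with
  | nil => exact .nil
  | cons x P ih =>
    rw [cons_eq_singleton_rcat hP.1]
    exact (sub x.1 x.1 hP.head_pos (ih hP.tail)).congr_cost (by simp [hsub0])

theorem append {P₁ Q₁ P₂ Q₂ : List (α × ℝ)} {c₁ c₂ : ℝ}
    (h₁ : Align wdel wins wsub P₁ Q₁ c₁) (h₂ : Align wdel wins wsub P₂ Q₂ c₂) :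
    Align wdel wins wsub (rcat P₁ P₂) (rcat Q₁ Q₂) (c₁ + c₂) := by
  induction h₁ with
  | nil => simpa using h₂
  | del a hm _ ih =>
    rw [rcat_assoc]; exact (del a hm ih).congr_cost (by ring)
  | ins b hm _ ih =>
    rw [rcat_assoc]; exact (ins b hm ih).congr_cost (by ring)
  | sub a b hm _ ih =>
    rw [rcat_assoc, rcat_assoc]; exact (sub a b hm ih).congr_cost (by ring)

theorem split {P Q : List (α × ℝ)} {c : ℝ} (h : Align wdel wins wsub P Q c) :
    ∀ Q₁ Q₂, RES Q₁ → RES Q₂ → Q = rcat Q₁ Q₂ →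
      ∃ P₁ P₂ c₁ c₂, P = rcat P₁ P₂ ∧ c = c₁ + c₂ ∧
        Align wdel wins wsub P₁ Q₁ c₁ ∧ Align wdel wins wsub P₂ Q₂ c₂ := by
  induction h with
  | nil =>
    intro Q₁ Q₂ _ _ hQ
    obtain ⟨rfl, rfl⟩ := rcat_eq_nil hQ.symm
    exact ⟨[], [], 0, 0, rfl, by simp, .nil, .nil⟩
  | @del P Q c a m hm h ih =>
    intro Q₁ Q₂ hQ₁ hQ₂ hQ
    obtain ⟨P₁, P₂, c₁, c₂, rfl, rfl, h₁, h₂⟩ := ih Q₁ Q₂ hQ₁ hQ₂ hQ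
    exact ⟨_, P₂, _, c₂, (rcat_assoc ..).symm, by ring, del a hm h₁, h₂⟩
  | @ins P Q c b m hm h ih =>
    intro Q₁ Q₂ hQ₁ hQ₂ hQ
    rcases eq_or_ne Q₁ [] with rfl | hne
    · rw [rcat_nil_left] at hQ
      exact ⟨[], P, 0, _, by simp, by ring, .nil, hQ ▸ ins b hm h⟩
    rcases singleton_rcat_eq_rcat hm h.res.2 hQ₁ hQ₂ hne hQ with
      ⟨Q', hQ', rfl, hQQ⟩ | ⟨t, ht, htm, rfl, rfl⟩
    · obtain ⟨P₁, P₂, c₁, c₂, rfl, rfl, h₁, h₂⟩ := ih Q' Q₂ hQ' hQ₂ hQQ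
      exact ⟨P₁, P₂, _, c₂, rfl, by ring, ins b hm h₁, h₂⟩
    · refine ⟨[], P, t * wins b + 0, (m - t) * wins b + c, by simp, by ring, ?_,
        ins b (by linarith) h⟩
      simpa using ins b ht (nil (wdel := wdel) (wins := wins) (wsub := wsub))
  | @sub P Q c a b m hm h ih =>
    intro Q₁ Q₂ hQ₁ hQ₂ hQ
    rcases eq_or_ne Q₁ [] with rfl | hne
    · rw [rcat_nil_left] at hQ
      exact ⟨[], _, 0, _, by simp, by ring, .nil, hQ ▸ sub a b hm h⟩
    rcases singleton_rcat_eq_rcat hm h.res.2 hQ₁ hQ₂ hne hQ with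
      ⟨Q', hQ', rfl, hQQ⟩ | ⟨t, ht, htm, rfl, rfl⟩
    · obtain ⟨P₁, P₂, c₁, c₂, rfl, rfl, h₁, h₂⟩ := ih Q' Q₂ hQ' hQ₂ hQQ
      exact ⟨_, P₂, _, c₂, (rcat_assoc ..).symm, by ring, sub a b hm h₁, h₂⟩
    · refine ⟨[(a, t)], rcat [(a, m - t)] P, t * wsub a b + 0, (m - t) * wsub a b + c, ?_,
        by ring, ?_, sub a b (by linarith) h⟩
      · rw [← singleton_rcat_split, add_sub_cancel]
      · simpa using sub a b ht (nil (wdel := wdel) (wins := wins) (wsub := wsub))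

theorem delete_prependPow (hdel : ∀ a, 0 ≤ wdel a) (hins : ∀ a, 0 ≤ wins a)
    (htri₄ : ∀ a b, wdel a ≤ wsub a b + wdel b) {a : α} {P X : List (α × ℝ)} {c : ℝ}
    (h : Align wdel wins wsub P X c) {q : ℝ} (hq : 0 ≤ q) (hX : X = prependPow a q []) :
    ∃ c' ≤ c + q * wdel a, Align wdel wins wsub P [] c' := by
  induction h generalizing q with
  | nil => exact ⟨0, by nlinarith [hdel a], .nil⟩
  | del x hm _ ih =>
    obtain ⟨c', hc', h'⟩ := ih hq hX
    exact ⟨_, by linarith, del x hm h'⟩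
  | @ins P X₀ c₀ y m hm h ih =>
    obtain ⟨hmq, rfl, hX₀⟩ := singleton_rcat_eq_prependPow_nil hm hq h.res.2 hX
    obtain ⟨c', hc', h'⟩ := ih (by linarith) hX₀
    exact ⟨c', by nlinarith [hins y, hdel y], h'⟩
  | @sub P₀ X₀ c₀ x y m hm h ih =>
    obtain ⟨hmq, rfl, hX₀⟩ := singleton_rcat_eq_prependPow_nil hm hq h.res.2 hX
    obtain ⟨c', hc', h'⟩ := ih (by linarith) hX₀
    exact ⟨_, by nlinarith [htri₄ x y], del x hm h'⟩

theorem subst_prependPow (htri₁ : ∀ a b c, wsub a c ≤ wsub a b + wsub b c)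
    (htri₃ : ∀ a b, wins b ≤ wins a + wsub a b) {a : α} (b : α) {P X : List (α × ℝ)} {c : ℝ}
    (h : Align wdel wins wsub P X c) {q : ℝ} (hq : 0 ≤ q) (hX : X = prependPow a q []) :
    ∃ c' ≤ c + q * wsub a b, Align wdel wins wsub P (prependPow b q []) c' := by
  induction h generalizing q with
  | nil =>
    obtain rfl : q = 0 := le_antisymm (prependPow_eq_nil hX.symm).1 hq
    exact ⟨0, by simp, by simpa using Align.nil⟩
  | del x hm _ ih =>
    obtain ⟨c', hc', h'⟩ := ih hq hX
    exact ⟨_, by linarith, del x hm h'⟩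
  | @ins P X₀ c₀ y m hm h ih =>
    obtain ⟨hmq, rfl, hX₀⟩ := singleton_rcat_eq_prependPow_nil hm hq h.res.2 hX
    obtain ⟨c', hc', h'⟩ := ih (by linarith) hX₀
    refine ⟨m * wins b + c', by nlinarith [htri₃ y b], ?_⟩
    rw [← sub_add_cancel q m, add_comm, ← prependPow_prependPow b hm.le (by linarith),
      prependPow_of_pos hm]
    exact ins b hm h'
  | @sub P₀ X₀ c₀ x y m hm h ih =>
    obtain ⟨hmq, rfl, hX₀⟩ := singleton_rcat_eq_prependPow_nil hm hq h.res.2 hX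
    obtain ⟨c', hc', h'⟩ := ih (by linarith) hX₀
    refine ⟨m * wsub x b + c', by nlinarith [htri₁ x y b], ?_⟩
    rw [← sub_add_cancel q m, add_comm, ← prependPow_prependPow b hm.le (by linarith),
      prependPow_of_pos hm]
    exact sub x b hm h'

section Triangle

variable (hdel : ∀ a, 0 ≤ wdel a) (hins : ∀ a, 0 ≤ wins a)
  (htri₁ : ∀ a b c, wsub a c ≤ wsub a b + wsub b c) (htri₃ : ∀ a b, wins b ≤ wins a + wsub a b)
  (htri₄ : ∀ a b, wdel a ≤ wsub a b + wdel b)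
include hdel hins htri₁ htri₃ htri₄

theorem edit {P X Y : List (α × ℝ)} {c d : ℝ} (h : Align wdel wins wsub P X c)
    (hXY : Edit wdel wins wsub X Y d) : ∃ c' ≤ c + d, Align wdel wins wsub P Y c' := by
  cases hXY with
  | ins a hq => exact ⟨_, (add_comm _ _).le, by simpa using ins a hq h⟩
  | del a hq => exact delete_prependPow hdel hins htri₄ h hq.le (by simp [prependPow_of_pos hq])
  | sub a b hq =>
    simpa [prependPow_of_pos hq] using
      subst_prependPow htri₁ htri₃ b h hq.le (by simp [prependPow_of_pos hq])

theorem step {P Q Q' : List (α × ℝ)} {c d : ℝ} (h : Align wdel wins wsub P Q c)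
    (hs : Step wdel wins wsub Q Q' d) : ∃ c' ≤ c + d, Align wdel wins wsub P Q' c' := by
  obtain ⟨p₁, p₂, X, Y, hp₁, hp₂, hXY, rfl, rfl⟩ := step_iff.mp hs
  obtain ⟨P₁, P₂, c₁, c₂, rfl, rfl, h₁, h₂⟩ := h.split p₁ _ hp₁ (hXY.res.1.rcat hp₂) rfl
  obtain ⟨P₂₁, P₂₂, c₂₁, c₂₂, rfl, rfl, h₂₁, h₂₂⟩ := h₂.split X p₂ hXY.res.1 hp₂ rfl
  obtain ⟨c', hc', h'⟩ := h₂₁.edit hdel hins htri₁ htri₃ htri₄ hXY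
  exact ⟨_, by linarith, h₁.append (h'.append h₂₂)⟩

theorem of_editCost (hsub0 : ∀ a, wsub a a = 0) {u v : List (α × ℝ)} {c : ℝ}
    (h : EditCost wdel wins wsub u v c) (hu : RES u) :
    ∃ c' ≤ c, Align wdel wins wsub u v c' := by
  induction h with
  | refl => exact ⟨0, le_rfl, refl hsub0 hu⟩
  | step _ s ih =>
    obtain ⟨c₁, hc₁, h₁⟩ := ih
    obtain ⟨c₂, hc₂, h₂⟩ := h₁.step hdel hins htri₁ htri₃ htri₄ s
    exact ⟨c₂, by linarith, h₂⟩

end Triangle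

end Align

end

/-- The cost of turning `γ^s` into `γ^t`. -/
def resizeCost (wdel wins : α → ℝ) (γ : α) (s t : ℝ) : ℝ :=
  max (t - s) 0 * wins γ + max (s - t) 0 * wdel γ

@[simp] theorem resizeCost_self (γ : α) (s : ℝ) : resizeCost wdel wins γ s s = 0 := by
  simp [resizeCost]

theorem resizeCost_of_le {γ : α} {s t : ℝ} (h : s ≤ t) :
    resizeCost wdel wins γ s t = (t - s) * wins γ := by
  simp [resizeCost, h]

theorem resizeCost_of_ge {γ : α} {s t : ℝ} (h : t ≤ s) :
    resizeCost wdel wins γ s t = (s - t) * wdel γ := by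
  simp [resizeCost, h]

theorem resizeCost_sub_sub (γ : α) (s t m : ℝ) :
    resizeCost wdel wins γ (s - m) (t - m) = resizeCost wdel wins γ s t := by
  simp [resizeCost]

theorem resizeCost_sub_left_le {γ : α} (hdel : 0 ≤ wdel γ) (hins : 0 ≤ wins γ) (s t : ℝ)
    {m : ℝ} (hm : 0 ≤ m) :
    resizeCost wdel wins γ (s - m) t ≤ m * wins γ + resizeCost wdel wins γ s t := by
  rcases le_total s t with h | h <;> rcases le_total (s - m) t with h' | h' <;>
    simp only [resizeCost_of_le, resizeCost_of_ge, h, h'] <;> nlinarith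

theorem resizeCost_sub_right_le {γ : α} (hdel : 0 ≤ wdel γ) (hins : 0 ≤ wins γ) (s t : ℝ)
    {m : ℝ} (hm : 0 ≤ m) :
    resizeCost wdel wins γ s (t - m) ≤ m * wdel γ + resizeCost wdel wins γ s t := by
  rcases le_total s t with h | h <;> rcases le_total s (t - m) with h' | h' <;>
    simp only [resizeCost_of_le, resizeCost_of_ge, h, h'] <;> nlinarith

variable [DecidableEq α]

/-- The invariant of the induction over alignments that cancels a common block `γ^s`. -/
def StripBound (wdel wins : α → ℝ) (wsub : α → α → ℝ) (γ : α) (P Q : List (α × ℝ)) (c : ℝ) :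
    Prop :=
  ∀ s₁ s₂ u v, 0 ≤ s₁ → 0 ≤ s₂ → RES u → RES v →
    P = prependPow γ s₁ u → Q = prependPow γ s₂ v →
      eDist wdel wins wsub u v ≤ c + resizeCost wdel wins γ s₂ s₁

section Nonneg

variable (hdel : ∀ a, 0 ≤ wdel a) (hins : ∀ a, 0 ≤ wins a) (hsub : ∀ a b, 0 ≤ wsub a b)
include hdel hins hsub

theorem eDist_prependPow_prependPow_le_resizeCost (htri₃ : ∀ a b, wins b ≤ wins a + wsub a b)
    (htri₄ : ∀ a b, wdel a ≤ wsub a b + wdel b) {γ a b : α} {m s₁ s₂ : ℝ} (hs₁ : 0 ≤ s₁)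
    (hs₂ : 0 ≤ s₂) (hm₁ : s₁ ≤ m) (hm₂ : s₂ ≤ m) (ha : a = γ ∨ s₁ = 0) (hb : b = γ ∨ s₂ = 0)
    {P Q : List (α × ℝ)} (hP : RES P) (hQ : RES Q) :
    eDist wdel wins wsub (prependPow a (m - s₁) P) (prependPow b (m - s₂) Q) ≤
      m * wsub a b + resizeCost wdel wins γ s₂ s₁ + eDist wdel wins wsub P Q := by
  rcases le_total s₂ s₁ with h | h
  · have := eDist_prependPow_prependPow_le_of_le hdel hins hsub a b (by linarith : 0 ≤ m - s₁)
      (by linarith : m - s₁ ≤ m - s₂) hP hQ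
    rw [resizeCost_of_le h]
    rcases ha with rfl | rfl
    · linarith [mul_le_mul_of_nonneg_left (htri₃ a b) (by linarith : 0 ≤ s₁ - s₂),
        mul_nonneg hs₂ (hsub a b)]
    · obtain rfl : s₂ = 0 := by linarith
      simp only [sub_zero, sub_self, zero_mul, add_zero] at this ⊢
      linarith
  · have := eDist_prependPow_prependPow_le_of_ge hdel hins hsub a b (by linarith : 0 ≤ m - s₂)
      (by linarith : m - s₂ ≤ m - s₁) hP hQ
    rw [resizeCost_of_ge h]
    rcases hb with rfl | rfl
    · linarith [mul_le_mul_of_nonneg_left (htri₄ a b) (by linarith : 0 ≤ s₂ - s₁),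
        mul_nonneg hs₁ (hsub a b)]
    · obtain rfl : s₁ = 0 := by linarith
      simp only [sub_zero, sub_self, zero_mul, add_zero] at this ⊢
      linarith

namespace StripBound

theorem nil (γ : α) : StripBound wdel wins wsub γ [] [] 0 := by
  intro s₁ s₂ u v hs₁ hs₂ _ _ hP hQ
  obtain ⟨hs₁', rfl⟩ := prependPow_eq_nil hP.symm
  obtain ⟨hs₂', rfl⟩ := prependPow_eq_nil hQ.symm
  obtain rfl : s₁ = 0 := le_antisymm hs₁' hs₁
  obtain rfl : s₂ = 0 := le_antisymm hs₂' hs₂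
  simpa using eDist_le hdel hins hsub (EditCost.refl (wdel := wdel) (wins := wins) (wsub := wsub))

theorem del {γ : α} {P Q : List (α × ℝ)} {c : ℝ} (ih : StripBound wdel wins wsub γ P Q c)
    (hP : RES P) (a : α) {m : ℝ} (hm : 0 < m) :
    StripBound wdel wins wsub γ (rcat [(a, m)] P) Q (m * wdel a + c) := by
  intro s₁ s₂ u v hs₁ hs₂ hu hv hPu hQv
  rcases singleton_rcat_eq_prependPow hm hs₁ hP hu hPu with ⟨hms, rfl, hP'⟩ | ⟨hsm, ha, rfl⟩
  · have := ih _ _ u v (by linarith) hs₂ hu hv hP' hQv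
    linarith [resizeCost_sub_right_le (hdel a) (hins a) s₂ s₁ hm.le]
  · have hIH := ih 0 s₂ P v le_rfl hs₂ hP hv (by simp) hQv
    have hu := eDist_prependPow_left_le hdel hins hsub a (by linarith : 0 ≤ m - s₁) hP hv
    have hγ := resizeCost_sub_right_le (hdel γ) (hins γ) s₂ s₁ hs₁
    have ha' : s₁ * wdel a = s₁ * wdel γ := by rcases ha with rfl | rfl <;> simp
    rw [sub_self] at hγ
    linarith

theorem ins {γ : α} {P Q : List (α × ℝ)} {c : ℝ} (ih : StripBound wdel wins wsub γ P Q c)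
    (hQ : RES Q) (b : α) {m : ℝ} (hm : 0 < m) :
    StripBound wdel wins wsub γ P (rcat [(b, m)] Q) (m * wins b + c) := by
  intro s₁ s₂ u v hs₁ hs₂ hu hv hPu hQv
  rcases singleton_rcat_eq_prependPow hm hs₂ hQ hv hQv with ⟨hms, rfl, hQ'⟩ | ⟨hsm, hb, rfl⟩
  · have := ih _ _ u v hs₁ (by linarith) hu hv hPu hQ'
    linarith [resizeCost_sub_left_le (hdel b) (hins b) s₂ s₁ hm.le]
  · have hIH := ih s₁ 0 u Q hs₁ le_rfl hu hQ hPu (by simp)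
    have hv := eDist_prependPow_right_le hdel hins hsub b (by linarith : 0 ≤ m - s₂) hu hQ
    have hγ := resizeCost_sub_left_le (hdel γ) (hins γ) s₂ s₁ hs₂
    have hb' : s₂ * wins b = s₂ * wins γ := by rcases hb with rfl | rfl <;> simp
    rw [sub_self] at hγ
    linarith

theorem sub (htri₃ : ∀ a b, wins b ≤ wins a + wsub a b)
    (htri₄ : ∀ a b, wdel a ≤ wsub a b + wdel b) {γ : α} {P Q : List (α × ℝ)} {c : ℝ}
    (ih : StripBound wdel wins wsub γ P Q c) (hP : RES P) (hQ : RES Q) (a b : α) {m : ℝ}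
    (hm : 0 < m) : StripBound wdel wins wsub γ (rcat [(a, m)] P) (rcat [(b, m)] Q)
      (m * wsub a b + c) := by
  intro s₁ s₂ u v hs₁ hs₂ hu hv hPu hQv
  rcases singleton_rcat_eq_prependPow hm hs₁ hP hu hPu with ⟨hm₁, rfl, hP'⟩ | ⟨hm₁, ha, rfl⟩ <;>
    rcases singleton_rcat_eq_prependPow hm hs₂ hQ hv hQv with ⟨hm₂, rfl, hQ'⟩ | ⟨hm₂, hb, rfl⟩
  · have := ih _ _ u v (by linarith) (by linarith) hu hv hP' hQ'
    rw [resizeCost_sub_sub] at this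
    linarith [mul_nonneg hm.le (hsub b b)]
  · have hIH := ih (s₁ - m) 0 u Q (by linarith) le_rfl hu hQ hP' (by simp)
    have hv := eDist_prependPow_right_le hdel hins hsub b (by linarith : 0 ≤ m - s₂) hu hQ
    rw [resizeCost_of_le (by linarith : (0 : ℝ) ≤ s₁ - m)] at hIH
    rw [resizeCost_of_le (by linarith : s₂ ≤ s₁)]
    linarith [mul_le_mul_of_nonneg_left (htri₃ a b) (by linarith : 0 ≤ m - s₂),
      mul_nonneg hs₂ (hsub a b)]
  · have hIH := ih 0 (s₂ - m) P v le_rfl (by linarith) hP hv (by simp) hQ'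
    have hu := eDist_prependPow_left_le hdel hins hsub a (by linarith : 0 ≤ m - s₁) hP hv
    rw [resizeCost_of_ge (by linarith : (0 : ℝ) ≤ s₂ - m)] at hIH
    rw [resizeCost_of_ge (by linarith : s₁ ≤ s₂)]
    linarith [mul_le_mul_of_nonneg_left (htri₄ a b) (by linarith : 0 ≤ m - s₁),
      mul_nonneg hs₁ (hsub a b)]
  · have hIH := ih 0 0 P Q le_rfl le_rfl hP hQ (by simp) (by simp)
    rw [resizeCost_self] at hIH
    linarith [eDist_prependPow_prependPow_le_resizeCost hdel hins hsub htri₃ htri₄ hs₁ hs₂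
      hm₁.le hm₂.le ha hb hP hQ]

end StripBound

theorem Align.stripBound (htri₃ : ∀ a b, wins b ≤ wins a + wsub a b)
    (htri₄ : ∀ a b, wdel a ≤ wsub a b + wdel b) (γ : α) {P Q : List (α × ℝ)} {c : ℝ}
    (h : Align wdel wins wsub P Q c) : StripBound wdel wins wsub γ P Q c := by
  induction h with
  | nil => exact .nil hdel hins hsub γ
  | del a hm h ih => exact ih.del hdel hins hsub h.res.1 a hm
  | ins b hm h ih => exact ih.ins hdel hins hsub h.res.2 b hm
  | sub a b hm h ih => exact ih.sub hdel hins hsub htri₃ htri₄ h.res.1 h.res.2 a b hm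

end Nonneg

section Cancel

variable (hdel : ∀ a, 0 ≤ wdel a) (hins : ∀ a, 0 ≤ wins a) (hsub : ∀ a b, 0 ≤ wsub a b)
  (hsub0 : ∀ a, wsub a a = 0) (htri₁ : ∀ a b c, wsub a c ≤ wsub a b + wsub b c)
  (htri₃ : ∀ a b, wins b ≤ wins a + wsub a b) (htri₄ : ∀ a b, wdel a ≤ wsub a b + wdel b)
include hdel hins hsub hsub0 htri₁ htri₃ htri₄

theorem eDist_singleton_rcat_cancel (γ : α) {s : ℝ} (hs : 0 < s) {u v : List (α × ℝ)}
    (hu : RES u) (hv : RES v) :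
    eDist wdel wins wsub (rcat [(γ, s)] u) (rcat [(γ, s)] v) = eDist wdel wins wsub u v := by
  refine le_antisymm (eDist_rcat_left_le hdel hins hsub (.singleton hs) hu hv) ?_
  refine le_eDist (hu.singleton_rcat hs) (hv.singleton_rcat hs) fun c hc => ?_
  obtain ⟨c', hc', h⟩ := Align.of_editCost hdel hins htri₁ htri₃ htri₄ hsub0 hc
    (hu.singleton_rcat hs)
  have := h.stripBound hdel hins hsub htri₃ htri₄ γ s s u v hs.le hs.le hu hv
    (prependPow_of_pos hs u).symm (prependPow_of_pos hs v).symm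
  simp only [resizeCost_self, add_zero] at this
  linarith

theorem eDist_rcat_left_cancel {z u v : List (α × ℝ)} (hz : RES z) (hu : RES u) (hv : RES v) :
    eDist wdel wins wsub (rcat z u) (rcat z v) = eDist wdel wins wsub u v := by
  induction z with
  | nil => simp
  | cons x z ih =>
    rw [cons_eq_singleton_rcat hz.1, rcat_assoc, rcat_assoc,
      eDist_singleton_rcat_cancel hdel hins hsub hsub0 htri₁ htri₃ htri₄ x.1 hz.head_pos
        (hz.tail.rcat hu) (hz.tail.rcat hv), ih hz.tail]

theorem eDist_rcat_right_cancel {z u v : List (α × ℝ)} (hz : RES z) (hu : RES u) (hv : RES v) :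
    eDist wdel wins wsub (rcat u z) (rcat v z) = eDist wdel wins wsub u v := by
  rw [← eDist_reverse, reverse_rcat, reverse_rcat,
    eDist_rcat_left_cancel hdel hins hsub hsub0 htri₁ htri₃ htri₄ hz.reverse hu.reverse hv.reverse,
    eDist_reverse]

end Cancel

end ExpStr

open ExpStr in
theorem eDist_cancel_both_general {α : Type*} [DecidableEq α]
    (wdel wins : α → ℝ) (wsub : α → α → ℝ)
    (hdel : ∀ a, 0 < wdel a) (hins : ∀ a, 0 < wins a)
    (hsub0 : ∀ a, wsub a a = 0) (hsubpos : ∀ a b, a ≠ b → 0 < wsub a b)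
    (htri₁ : ∀ a b c, wsub a c ≤ wsub a b + wsub b c)
    (htri₃ : ∀ a b, wins b ≤ wins a + wsub a b)
    (htri₄ : ∀ a b, wdel a ≤ wsub a b + wdel b)
    (x y u v : List (α × ℝ)) (hx : RES x) (hy : RES y) (hu : RES u) (hv : RES v) :
    eDist wdel wins wsub (rcat x (rcat u y)) (rcat x (rcat v y)) =
      eDist wdel wins wsub u v := by
  have hdel' : ∀ a, 0 ≤ wdel a := fun a => (hdel a).le
  have hins' : ∀ a, 0 ≤ wins a := fun a => (hins a).le
  have hsub : ∀ a b, 0 ≤ wsub a b := fun a b => by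
    rcases eq_or_ne a b with rfl | hab
    exacts [(hsub0 a).ge, (hsubpos a b hab).le]
  rw [eDist_rcat_left_cancel hdel' hins' hsub hsub0 htri₁ htri₃ htri₄ hx (hu.rcat hy) (hv.rcat hy),
    eDist_rcat_right_cancel hdel' hins' hsub hsub0 htri₁ htri₃ htri₄ hy hu hv]

open ExpStr in
/-- `dist(x·u·y, x·v·y) = dist(u, v)` for `ℝ⁺`-exponent-strings. -/
theorem eDist_cancel_both {α : Type*} [DecidableEq α]
    (wdel wins : α → ℝ) (wsub : α → α → ℝ)
    (hdel : ∀ a, 0 < wdel a) (hins : ∀ a, 0 < wins a)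
    (hsub0 : ∀ a, wsub a a = 0) (hsubpos : ∀ a b, a ≠ b → 0 < wsub a b)
    (htri₁ : ∀ a b c, wsub a c ≤ wsub a b + wsub b c)
    (htri₂ : ∀ a b, wsub a b ≤ wdel a + wins b)
    (htri₃ : ∀ a b, wins b ≤ wins a + wsub a b)
    (htri₄ : ∀ a b, wdel a ≤ wsub a b + wdel b)
    (x y u v : List (α × ℝ)) (hx : RES x) (hy : RES y) (hu : RES u) (hv : RES v) :
    eDist wdel wins wsub (rcat x (rcat u y)) (rcat x (rcat v y)) =
      eDist wdel wins wsub u v :=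
  eDist_cancel_both_general wdel wins wsub hdel hins hsub0 hsubpos htri₁ htri₃ htri₄ x y u v hx hy
    hu hv
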